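/- arXiv:math/9612213 — 3 statements merged into one kernel-verified Lean document; each statement's English description precedes it below -/
import Mathlib

section
/- Defect form of the Cauchy–Schwarz inequality: if X_1,...,X_n are real numbers, m ≤ n is a positive integer, and the partial sum of the first m terms satisfies Σ_{k=1}^m X_k = (m/n)·Σ_{k=1}^n X_k + D for some real D, then Σ_{k=1}^n X_k^2 ≥ (1/n)·(Σ_{k=1}^n X_k)^2 + D^2·n/(m·(n−m)). -/
/-!
Split the sum at `m` into `A = ∑_{k ≤ m} X k` and `B = ∑_{m < k ≤ n} X k`. Cauchy–Schwarz on each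
block gives `∑ X k ^ 2 ≥ A² / m + B² / (n - m)`, and with `S = A + B` and
`D = A - (m / n) S = ((n - m) A - m B) / n` this lower bound equals `S² / n + D² n / (m (n - m))`
exactly.
-/

open Finset

lemma sq_sum_div_card_le_sum_sq {ι α : Type*} [Field α] [LinearOrder α] [IsStrictOrderedRing α]
    (s : Finset ι) (f : ι → α) : (∑ i ∈ s, f i) ^ 2 / #s ≤ ∑ i ∈ s, f i ^ 2 := by
  obtain rfl | hs := s.eq_empty_or_nonempty
  · simp
  rw [div_le_iff₀' (by positivity)]
  exact sq_sum_le_card_mul_sum_sq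

lemma sq_div_add_sq_div_sub_eq_of_eq_add {α : Type*} [Field α] {n m A B D : α}
    (hn : n ≠ 0) (hm : m ≠ 0) (hnm : n - m ≠ 0) (hD : A = m / n * (A + B) + D) :
    A ^ 2 / m + B ^ 2 / (n - m) = 1 / n * (A + B) ^ 2 + D ^ 2 * n / (m * (n - m)) := by
  obtain rfl : D = A - m / n * (A + B) := eq_sub_of_add_eq' hD.symm
  field_simp
  ring

lemma sum_Icc_one_add_sum_Ioc {M : Type*} [AddCommMonoid M] {m n : ℕ} (hmn : m ≤ n)
    (f : ℕ → M) : ∑ k ∈ Icc 1 m, f k + ∑ k ∈ Ioc m n, f k = ∑ k ∈ Icc 1 n, f k := by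
  have hIcc (k : ℕ) : Icc 1 k = Ioc 0 k := Icc_add_one_left_eq_Ioc 0 k
  rw [hIcc, hIcc]
  exact sum_Ioc_consecutive f m.zero_le hmn

/-- Defect form of the Cauchy–Schwarz inequality. -/
theorem defect_cauchy_schwarz (n m : ℕ) (hm : 1 ≤ m) (hmn : m < n)
    (X : ℕ → ℝ) (D : ℝ)
    (hD : ∑ k ∈ Finset.Icc 1 m, X k = ((m : ℝ) / n) * ∑ k ∈ Finset.Icc 1 n, X k + D) :
    ∑ k ∈ Finset.Icc 1 n, (X k) ^ 2 ≥
      (1 / (n : ℝ)) * (∑ k ∈ Finset.Icc 1 n, X k) ^ 2 +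
        D ^ 2 * n / ((m : ℝ) * ((n : ℝ) - (m : ℝ))) := by
  have hm₀ : (m : ℝ) ≠ 0 := Nat.cast_ne_zero.mpr (by omega)
  have hn₀ : (n : ℝ) ≠ 0 := Nat.cast_ne_zero.mpr (by omega)
  have hnm₀ : (n : ℝ) - m ≠ 0 := sub_ne_zero.mpr (by exact_mod_cast hmn.ne')
  rw [← sum_Icc_one_add_sum_Ioc hmn.le X] at hD ⊢
  calc 1 / (n : ℝ) * (∑ k ∈ Icc 1 m, X k + ∑ k ∈ Ioc m n, X k) ^ 2 + D ^ 2 * n / (m * (n - m))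
      = (∑ k ∈ Icc 1 m, X k) ^ 2 / m + (∑ k ∈ Ioc m n, X k) ^ 2 / (n - m) :=
        (sq_div_add_sq_div_sub_eq_of_eq_add hn₀ hm₀ hnm₀ hD).symm
    _ ≤ ∑ k ∈ Icc 1 m, X k ^ 2 + ∑ k ∈ Ioc m n, X k ^ 2 := by
        gcongr
        · simpa using sq_sum_div_card_le_sum_sq (Icc 1 m) X
        · simpa [Nat.cast_sub hmn.le] using sq_sum_div_card_le_sum_sq (Ioc m n) X
    _ = ∑ k ∈ Icc 1 n, X k ^ 2 := sum_Icc_one_add_sum_Ioc hmn.le _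
end

section
/- Second-moment counting lemma (Lemma 1 core inequality): Let U be a bipartite graph between finite sets S and V with |V| = N, and suppose there is an 'exceptional' set F ⊆ V with |F| ≥ m (m ≥ 1, m < N) such that every v ∈ F has deg_U(v) < (1−β)·d(U)·|S|, where d(U) = e(U)/(|S|·N) and 0 < β < 1. Then Σ_{v∈V} deg_U(v)² ≥ e(U)²/N + D²·N/(m(N−m)), where D = (m/N)·e(U) − Σ_{v∈F'} deg_U(v) for some F' ⊆ F with |F'| = m, and D ≥ β·m·d(U)·|S|·(1 − m/N). In particular, Σ_{v∈V} deg_U(v)² ≥ e(U)²/N + β²·m·d(U)²·|S|²·(N−m)/N². -/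
open Finset

set_option maxHeartbeats 1600000 in
/-- Second-moment counting lemma: if a set `F` of at least `m` vertices of `V` all have
degree below `(1-β)·d(U)·|S|` in the bipartite graph `U` between `S` and `V`, then the
second moment of the degree sequence exceeds `e(U)²/N` by a definite defect term. -/
theorem second_moment_counting {α γ : Type*} (E : α → γ → Prop) [∀ a b, Decidable (E a b)]
    (S : Finset α) (V : Finset γ) (N m : ℕ)
    (hNV : V.card = N) (hN2 : 2 ≤ N) (hm1 : 1 ≤ m) (hmN : m < N)
    (β : ℝ) (hβ0 : 0 < β) (hβ1 : β < 1)
    (F : Finset γ) (hFV : F ⊆ V) (hFm : m ≤ F.card)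
    (e d : ℝ)
    (he : e = ∑ v ∈ V, ((S.filter (fun x => E x v)).card : ℝ))
    (hd : d = e / ((S.card : ℝ) * (N : ℝ)))
    (hdegF : ∀ v ∈ F, ((S.filter (fun x => E x v)).card : ℝ) < (1 - β) * d * (S.card : ℝ)) :
    (∃ F' ⊆ F, F'.card = m ∧
      (∑ v ∈ V, ((S.filter (fun x => E x v)).card : ℝ) ^ 2 ≥
        e ^ 2 / (N : ℝ) +
          ((m : ℝ) / (N : ℝ) * e - ∑ v ∈ F', ((S.filter (fun x => E x v)).card : ℝ)) ^ 2 *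
            (N : ℝ) / ((m : ℝ) * ((N : ℝ) - (m : ℝ)))) ∧
      ((m : ℝ) / (N : ℝ) * e - ∑ v ∈ F', ((S.filter (fun x => E x v)).card : ℝ)) ≥
        β * (m : ℝ) * d * (S.card : ℝ) * (1 - (m : ℝ) / (N : ℝ))) ∧
    ∑ v ∈ V, ((S.filter (fun x => E x v)).card : ℝ) ^ 2 ≥
      e ^ 2 / (N : ℝ) +
        β ^ 2 * (m : ℝ) * d ^ 2 * ((S.card : ℝ)) ^ 2 * ((N : ℝ) - (m : ℝ)) / (N : ℝ) ^ 2 := by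
  classical
  set deg : γ → ℝ := fun v => ((S.filter (fun x => E x v)).card : ℝ) with hdeg
  -- S is nonempty
  have hFne : F.Nonempty := Finset.card_pos.mp (lt_of_lt_of_le hm1 hFm)
  have hSpos : 0 < (S.card : ℝ) := by
    by_contra h
    push_neg at h
    have hS0 : (S.card : ℝ) = 0 := le_antisymm h (by positivity)
    obtain ⟨v, hv⟩ := hFne
    have := hdegF v hv
    rw [hS0] at this
    simp only [mul_zero] at this
    have : (0:ℝ) ≤ ((S.filter (fun x => E x v)).card : ℝ) := by positivity
    linarith [hdegF v hv, hS0 ▸ this]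
  have hNpos : (0:ℝ) < (N:ℝ) := by positivity
  have hmpos : (0:ℝ) < (m:ℝ) := by exact_mod_cast hm1
  have hmN' : (m:ℝ) < (N:ℝ) := by exact_mod_cast hmN
  have hNm : (0:ℝ) < (N:ℝ) - (m:ℝ) := by linarith
  -- e ≥ 0, d ≥ 0
  have hepos : 0 ≤ e := by rw [he]; exact Finset.sum_nonneg fun v _ => Nat.cast_nonneg _
  have hdpos : 0 ≤ d := by rw [hd]; exact div_nonneg hepos (by positivity)
  have heq : e = d * (S.card : ℝ) * (N : ℝ) := by
    rw [hd]; field_simp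
  obtain ⟨F', hF'F, hF'card⟩ := Finset.exists_subset_card_eq hFm
  have hF'V : F' ⊆ V := hF'F.trans hFV
  set a := ∑ v ∈ F', deg v with ha
  set b := ∑ v ∈ V \ F', deg v with hb
  have hVsplit : e = a + b := by
    rw [he, ha, hb, ← Finset.sum_sdiff hF'V]; ring
  have hcardsd : ((V \ F').card : ℝ) = (N:ℝ) - (m:ℝ) := by
    rw [Finset.card_sdiff_of_subset hF'V, hF'card, hNV]
    have : m ≤ N := hmN.le
    push_cast [Nat.cast_sub this]
    ring
  -- Cauchy-Schwarz on each part
  have cs1 : a ^ 2 ≤ (m:ℝ) * ∑ v ∈ F', deg v ^ 2 := by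
    have := sq_sum_le_card_mul_sum_sq (s := F') (f := deg)
    rwa [hF'card] at this
  have cs2 : b ^ 2 ≤ ((N:ℝ) - (m:ℝ)) * ∑ v ∈ V \ F', deg v ^ 2 := by
    have := sq_sum_le_card_mul_sum_sq (s := V \ F') (f := deg)
    rwa [hcardsd] at this
  have hsumsplit : ∑ v ∈ V, deg v ^ 2
      = (∑ v ∈ F', deg v ^ 2) + ∑ v ∈ V \ F', deg v ^ 2 := by
    rw [← Finset.sum_sdiff hF'V]; ring
  have key : ∑ v ∈ V, deg v ^ 2 ≥ a ^ 2 / (m:ℝ) + b ^ 2 / ((N:ℝ) - (m:ℝ)) := by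
    rw [hsumsplit]
    have h1 : a ^ 2 / (m:ℝ) ≤ ∑ v ∈ F', deg v ^ 2 :=
      (div_le_iff₀ hmpos).mpr (by linarith [cs1])
    have h2 : b ^ 2 / ((N:ℝ) - (m:ℝ)) ≤ ∑ v ∈ V \ F', deg v ^ 2 :=
      (div_le_iff₀ hNm).mpr (by linarith [cs2])
    linarith
  set D := (m:ℝ) / (N:ℝ) * e - a with hD
  have halg : a ^ 2 / (m:ℝ) + b ^ 2 / ((N:ℝ) - (m:ℝ))
      = e ^ 2 / (N:ℝ) + D ^ 2 * (N:ℝ) / ((m:ℝ) * ((N:ℝ) - (m:ℝ))) := by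
    have hbe : b = e - a := by linarith [hVsplit]
    rw [hbe, hD]
    field_simp
    ring
  have main1 : ∑ v ∈ V, deg v ^ 2 ≥ e ^ 2 / (N:ℝ) + D ^ 2 * (N:ℝ) / ((m:ℝ) * ((N:ℝ) - (m:ℝ))) := by
    rw [← halg]; exact key
  -- lower bound on D
  have hasum : a < (m:ℝ) * ((1 - β) * d * (S.card : ℝ)) := by
    have hF'ne : F'.Nonempty := Finset.card_pos.mp (by rw [hF'card]; exact hm1)
    have := Finset.sum_lt_sum_of_nonempty hF'ne (fun v hv => hdegF v (hF'F hv))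
    rwa [Finset.sum_const, hF'card, nsmul_eq_mul] at this
  have hDlb : D ≥ β * (m:ℝ) * d * (S.card : ℝ) := by
    have : (m:ℝ) / (N:ℝ) * e = (m:ℝ) * d * (S.card : ℝ) := by
      rw [heq, div_mul_eq_mul_div, div_eq_iff hNpos.ne']; ring
    rw [hD, this]
    nlinarith [hasum]
  have hbd : 0 ≤ β * (m:ℝ) * d * (S.card : ℝ) := mul_nonneg (mul_nonneg (mul_nonneg hβ0.le hmpos.le) hdpos) hSpos.le
  have hfrac : 0 < 1 - (m:ℝ)/(N:ℝ) := by
    rw [sub_pos, div_lt_one hNpos]; exact hmN'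
  have hDlb2 : D ≥ β * (m:ℝ) * d * (S.card : ℝ) * (1 - (m:ℝ)/(N:ℝ)) := by
    have hle1 : 1 - (m:ℝ)/(N:ℝ) ≤ 1 := by
      have : 0 ≤ (m:ℝ)/(N:ℝ) := div_nonneg (Nat.cast_nonneg m) hNpos.le
      linarith
    calc β * (m:ℝ) * d * (S.card : ℝ) * (1 - (m:ℝ)/(N:ℝ))
        ≤ β * (m:ℝ) * d * (S.card : ℝ) * 1 := mul_le_mul_of_nonneg_left hle1 hbd
      _ = β * (m:ℝ) * d * (S.card : ℝ) := mul_one _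
      _ ≤ D := hDlb
  have hDpos : 0 ≤ D := le_trans (mul_nonneg hbd hfrac.le) hDlb2
  refine ⟨⟨F', hF'F, hF'card, main1, hDlb2⟩, ?_⟩
  -- final inequality
  have hD2 : D ^ 2 ≥ (β * (m:ℝ) * d * (S.card : ℝ) * (1 - (m:ℝ)/(N:ℝ))) ^ 2 := by
    have h0 : 0 ≤ β * (m:ℝ) * d * (S.card : ℝ) * (1 - (m:ℝ)/(N:ℝ)) := mul_nonneg hbd hfrac.le
    exact pow_le_pow_left₀ h0 hDlb2 2
  have hterm : D ^ 2 * (N:ℝ) / ((m:ℝ) * ((N:ℝ) - (m:ℝ)))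
      ≥ β ^ 2 * (m:ℝ) * d ^ 2 * ((S.card : ℝ)) ^ 2 * ((N:ℝ) - (m:ℝ)) / (N:ℝ) ^ 2 := by
    have hsq : (β * (m:ℝ) * d * (S.card : ℝ) * (1 - (m:ℝ)/(N:ℝ))) ^ 2 * (N:ℝ) / ((m:ℝ) * ((N:ℝ) - (m:ℝ)))
        = β ^ 2 * (m:ℝ) * d ^ 2 * ((S.card : ℝ)) ^ 2 * ((N:ℝ) - (m:ℝ)) / (N:ℝ) := by
      have h1mn : 1 - (m:ℝ)/(N:ℝ) = ((N:ℝ) - (m:ℝ))/(N:ℝ) := one_sub_div hNpos.ne'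
      rw [h1mn, div_eq_div_iff (mul_pos hmpos hNm).ne' hNpos.ne']
      have ht : ((N:ℝ) - (m:ℝ))/(N:ℝ) * (N:ℝ) = (N:ℝ) - (m:ℝ) := div_mul_cancel₀ _ hNpos.ne'
      linear_combination (β * (m:ℝ) * d * (S.card : ℝ)) ^ 2 * (((N:ℝ) - (m:ℝ))/(N:ℝ) * (N:ℝ) + ((N:ℝ) - (m:ℝ))) * ht
    have hmono : β ^ 2 * (m:ℝ) * d ^ 2 * ((S.card : ℝ)) ^ 2 * ((N:ℝ) - (m:ℝ)) / (N:ℝ) ^ 2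
        ≤ β ^ 2 * (m:ℝ) * d ^ 2 * ((S.card : ℝ)) ^ 2 * ((N:ℝ) - (m:ℝ)) / (N:ℝ) := by
      have hN1 : (1:ℝ) ≤ (N:ℝ) := by exact_mod_cast Nat.one_le_of_lt hN2
      apply div_le_div_of_nonneg_left (mul_nonneg (mul_nonneg (mul_nonneg (mul_nonneg (sq_nonneg β) hmpos.le) (sq_nonneg d)) (sq_nonneg _)) hNm.le) hNpos
      nlinarith [hN1, hNpos]
    calc β ^ 2 * (m:ℝ) * d ^ 2 * ((S.card : ℝ)) ^ 2 * ((N:ℝ) - (m:ℝ)) / (N:ℝ) ^ 2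
        ≤ β ^ 2 * (m:ℝ) * d ^ 2 * ((S.card : ℝ)) ^ 2 * ((N:ℝ) - (m:ℝ)) / (N:ℝ) := hmono
      _ = (β * (m:ℝ) * d * (S.card : ℝ) * (1 - (m:ℝ)/(N:ℝ))) ^ 2 * (N:ℝ) / ((m:ℝ) * ((N:ℝ) - (m:ℝ))) := hsq.symm
      _ ≤ D ^ 2 * (N:ℝ) / ((m:ℝ) * ((N:ℝ) - (m:ℝ))) := by
          apply div_le_div_of_nonneg_right _ (mul_pos hmpos hNm).le
          nlinarith [hD2]
  linarith [main1, hterm]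
end

section
/- If every pair of unmatched vertices x ∈ Z(X), y ∈ Z(Y) of a matching in a bipartite graph admits at least c·N internally vertex-disjoint alternating paths of length 5, and |Z(X)| = |Z(Y)| = k with 5k < c·N, then one can select pairwise vertex-disjoint alternating paths of length 5 connecting all unmatched pairs, and hence the graph has a perfect matching. -/
/-!
The paths are chosen greedily, one unmatched pair `(zx i, zy i)` at a time. Paths for different
pairs can meet only in internal vertices: their ends are distinct unmatched vertices, while the
internal vertices are matched. The members of one family are internally disjoint, so a chosen path
meets at most four members of any other family, and since `4 (k - 1) < 5 k < c N` some member
is always free. Switching `M₀` along the `k` disjoint augmenting paths then gives a perfect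
matching, because every unmatched vertex is an end of one of them.
-/

open Finset

/-- `p` is an `M₀`-alternating path of length 5 in `G`: its six vertices are distinct and
its edge pattern is (non-matching, matching, non-matching, matching, non-matching). -/
def AltPath5 {V : Type*} (G : SimpleGraph V) (M₀ : G.Subgraph) (p : Fin 6 → V) : Prop :=
  Function.Injective p ∧
  G.Adj (p 0) (p 1) ∧ ¬ M₀.Adj (p 0) (p 1) ∧
  M₀.Adj (p 1) (p 2) ∧
  G.Adj (p 2) (p 3) ∧ ¬ M₀.Adj (p 2) (p 3) ∧
  M₀.Adj (p 3) (p 4) ∧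
  G.Adj (p 4) (p 5) ∧ ¬ M₀.Adj (p 4) (p 5)

theorem card_le_card_of_forall_exists_apply_eq {ι V : Type*} (F : Finset (ι → V)) (I : Finset ι)
    (q : ι → V) (hF : ∀ p ∈ F, ∀ p' ∈ F, p ≠ p' → ∀ a ∈ I, ∀ b ∈ I, p a ≠ p' b)
    (hmeet : ∀ p ∈ F, ∃ a b, p a = q b) (hq : ∀ p ∈ F, ∀ a b, p a = q b → a ∈ I ∧ b ∈ I) :
    #F ≤ #I := by
  refine card_le_card_of_forall_subsingleton (fun p b ↦ ∃ a, p a = q b) (fun p hp ↦ ?_) ?_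
  · obtain ⟨a, b, hab⟩ := hmeet p hp
    exact ⟨b, (hq p hp a b hab).2, a, hab⟩
  · rintro b - p ⟨hp, a, ha⟩ p' ⟨hp', a', ha'⟩
    by_contra hne
    exact hF p hp p' hp' hne a (hq p hp a b ha).1 a' (hq p' hp' a' b ha').1 (ha.trans ha'.symm)

theorem exists_mem_forall_not_rel_of_card_mul_lt {ι β : Type*} (A : Finset β) (s : Finset ι)
    (R : β → ι → Prop) [DecidableRel R] (d : ℕ) (hR : ∀ j ∈ s, #{p ∈ A | R p j} ≤ d)
    (hA : #s * d < #A) : ∃ p ∈ A, ∀ j ∈ s, ¬R p j := by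
  classical
  have hbad : #{p ∈ A | ∃ j ∈ s, R p j} < #A := calc
    _ ≤ #(s.biUnion fun j ↦ {p ∈ A | R p j}) := card_le_card fun p hp ↦ by
        obtain ⟨hpA, j, hj, hpj⟩ := mem_filter.1 hp
        exact mem_biUnion.2 ⟨j, hj, mem_filter.2 ⟨hpA, hpj⟩⟩
    _ ≤ #s * d := card_biUnion_le_card_mul _ _ _ hR
    _ < #A := hA
  obtain ⟨p, hpA, hp⟩ := exists_mem_notMem_of_card_lt_card hbad
  exact ⟨p, hpA, fun j hj hpj ↦ hp (mem_filter.2 ⟨hpA, j, hj, hpj⟩)⟩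

theorem exists_selection_pairwise_not_rel {ι β : Type*} [Fintype ι] (F : ι → Finset β)
    (R : β → β → Prop) [DecidableRel R] (hR_symm : ∀ p q, R p q → R q p) (d : ℕ)
    (hR : ∀ i j, i ≠ j → ∀ q ∈ F j, #{p ∈ F i | R p q} ≤ d)
    (hF : ∀ i, d * (Fintype.card ι - 1) < #(F i)) :
    ∃ P : ι → β, (∀ i, P i ∈ F i) ∧ Pairwise fun i j ↦ ¬R (P i) (P j) := by
  classical
  choose P₀ hP₀ using fun i ↦ card_pos.1 ((Nat.zero_le _).trans_lt (hF i))
  suffices ∀ s : Finset ι, ∃ P : ι → β, (∀ i, P i ∈ F i) ∧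
      ∀ i ∈ s, ∀ j ∈ s, i ≠ j → ¬R (P i) (P j) by
    obtain ⟨P, hPF, hP⟩ := this univ
    exact ⟨P, hPF, fun i j hij ↦ hP i (mem_univ i) j (mem_univ j) hij⟩
  intro s
  induction s using Finset.induction_on with
  | empty => exact ⟨P₀, hP₀, by simp⟩
  | insert a s ha ih =>
    obtain ⟨P, hPF, hP⟩ := ih
    have hs : #s ≤ Fintype.card ι - 1 := by
      have := card_le_univ (insert a s)
      rw [card_insert_of_notMem ha] at this
      omega
    obtain ⟨p, hpF, hpgood⟩ :=
      exists_mem_forall_not_rel_of_card_mul_lt (F a) s (fun p j ↦ R p (P j)) d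
      (fun j hj ↦ hR a j (ne_of_mem_of_not_mem hj ha).symm (P j) (hPF j))
      ((mul_comm #s d ▸ Nat.mul_le_mul_left d hs).trans_lt (hF a))
    refine ⟨Function.update P a p, fun i ↦ ?_, ?_⟩
    · rcases eq_or_ne i a with rfl | hi
      · simpa using hpF
      · simpa [hi] using hPF i
    · intro i hi j hj hij
      rw [mem_insert] at hi hj
      rcases hi with rfl | hi <;> rcases hj with rfl | hj
      · exact absurd rfl hij
      · simpa [ne_of_mem_of_not_mem hj ha] using hpgood j hj
      · simpa [ne_of_mem_of_not_mem hi ha] using fun h ↦ hpgood i hi (hR_symm _ _ h)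
      · simpa [ne_of_mem_of_not_mem hi ha, ne_of_mem_of_not_mem hj ha] using hP i hi j hj hij

namespace SimpleGraph.Subgraph

variable {V : Type*} {G : SimpleGraph V}

theorem IsMatching.deleteVerts {M : G.Subgraph} (hM : M.IsMatching) {s : Set V}
    (hs : ∀ ⦃v w⦄, M.Adj v w → v ∈ s → w ∈ s) : (M.deleteVerts s).IsMatching := by
  rintro v ⟨hv, hvs⟩
  obtain ⟨w, hvw, hw⟩ := hM hv
  refine ⟨w, ?_, fun u hu ↦ hw u (deleteVerts_adj.1 hu).2.2.2.2⟩
  exact deleteVerts_adj.2 ⟨hv, hvs, M.edge_vert hvw.symm, fun hws ↦ hvs (hs hvw.symm hws), hvw⟩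

end SimpleGraph.Subgraph

section AugmentingPaths

open SimpleGraph Subgraph

variable {V : Type*} {G : SimpleGraph V} {M₀ : G.Subgraph} {p q : Fin 6 → V}

structure AugPath5 (G : SimpleGraph V) (M₀ : G.Subgraph) (p : Fin 6 → V) : Prop where
  toAltPath5 : AltPath5 G M₀ p
  apply_zero_notMem : p 0 ∉ M₀.verts
  apply_five_notMem : p 5 ∉ M₀.verts

namespace AugPath5

theorem mem_verts_iff (hp : AugPath5 G M₀ p) {a : Fin 6} :
    p a ∈ M₀.verts ↔ a ≠ 0 ∧ a ≠ 5 := by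
  obtain ⟨⟨-, -, -, h12, -, -, h34, -, -⟩, h0, h5⟩ := hp
  fin_cases a
  · simpa using h0
  · simpa using M₀.edge_vert h12
  · simpa using M₀.edge_vert h12.symm
  · simpa using M₀.edge_vert h34
  · simpa using M₀.edge_vert h34.symm
  · simpa using h5

theorem mem_range_of_adj (hM₀ : M₀.IsMatching) (hp : AugPath5 G M₀ p) {a : Fin 6} {w : V}
    (hw : M₀.Adj (p a) w) : w ∈ Set.range p := by
  have hpa := hp.mem_verts_iff.1 (M₀.edge_vert hw)
  obtain ⟨⟨-, -, -, h12, -, -, h34, -, -⟩, -, -⟩ := hp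
  fin_cases a
  · exact absurd rfl hpa.1
  · exact ⟨2, hM₀.eq_of_adj_left h12 hw⟩
  · exact ⟨1, hM₀.eq_of_adj_left h12.symm hw⟩
  · exact ⟨4, hM₀.eq_of_adj_left h34 hw⟩
  · exact ⟨3, hM₀.eq_of_adj_left h34.symm hw⟩
  · exact absurd rfl hpa.2

theorem internal_of_apply_eq (hp : AugPath5 G M₀ p) (hq : AugPath5 G M₀ q)
    (hends : Disjoint ({p 0, p 5} : Set V) {q 0, q 5}) {a b : Fin 6} (hab : p a = q b) :
    (a ≠ 0 ∧ a ≠ 5) ∧ (b ≠ 0 ∧ b ≠ 5) := by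
  have hiff : (a ≠ 0 ∧ a ≠ 5) ↔ (b ≠ 0 ∧ b ≠ 5) := by
    rw [← hp.mem_verts_iff, ← hq.mem_verts_iff, hab]
  by_contra h
  have ha : a = 0 ∨ a = 5 := by tauto
  have hb : b = 0 ∨ b = 5 := by tauto
  have hpa : p a ∈ ({p 0, p 5} : Set V) := by rcases ha with rfl | rfl <;> simp
  have hqb : q b ∈ ({q 0, q 5} : Set V) := by rcases hb with rfl | rfl <;> simp
  exact Set.disjoint_left.1 hends hpa (hab ▸ hqb)

theorem card_filter_exists_apply_eq_le_four [DecidableEq V] {F : Finset (Fin 6 → V)}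
    (hF : ∀ p ∈ F, AugPath5 G M₀ p)
    (hFdisj : ∀ p ∈ F, ∀ p' ∈ F, p ≠ p' →
      ∀ a b : Fin 6, a ≠ 0 → a ≠ 5 → b ≠ 0 → b ≠ 5 → p a ≠ p' b)
    (hq : AugPath5 G M₀ q) (hends : ∀ p ∈ F, Disjoint ({p 0, p 5} : Set V) {q 0, q 5}) :
    #{p ∈ F | ∃ a b, p a = q b} ≤ 4 := by
  refine (card_le_card_of_forall_exists_apply_eq _ {a | a ≠ 0 ∧ a ≠ 5} q ?_ ?_ ?_).trans_eq
    (by decide)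
  · intro p hp p' hp' hne a ha b hb
    rw [mem_filter] at hp hp' ha hb
    exact hFdisj p hp.1 p' hp'.1 hne a b ha.2.1 ha.2.2 hb.2.1 hb.2.2
  · exact fun p hp ↦ (mem_filter.1 hp).2
  · intro p hp a b hab
    rw [mem_filter] at hp
    simpa using (hF p hp.1).internal_of_apply_eq hq (hends p hp.1) hab

end AugPath5

namespace AltPath5

-- the edges `p 0 p 1`, `p 2 p 3` and `p 4 p 5`
def nonMatchingEdges (hp : AltPath5 G M₀ p) : G.Subgraph :=
  G.subgraphOfAdj hp.2.1 ⊔ G.subgraphOfAdj hp.2.2.2.2.1 ⊔ G.subgraphOfAdj hp.2.2.2.2.2.2.2.1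

theorem verts_nonMatchingEdges (hp : AltPath5 G M₀ p) :
    hp.nonMatchingEdges.verts = Set.range p := by
  ext v
  simp only [nonMatchingEdges, verts_sup, subgraphOfAdj_verts, Set.mem_union, Set.mem_insert_iff,
    Set.mem_singleton_iff]
  constructor
  · rintro (((rfl | rfl) | rfl | rfl) | rfl | rfl) <;> exact ⟨_, rfl⟩
  · rintro ⟨a, rfl⟩
    fin_cases a <;> simp

theorem isMatching_nonMatchingEdges (hp : AltPath5 G M₀ p) : hp.nonMatchingEdges.IsMatching := by
  have hinj := hp.1
  have h₁ := (IsMatching.subgraphOfAdj hp.2.1).sup (IsMatching.subgraphOfAdj hp.2.2.2.2.1)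
    (by simp [Set.disjoint_left, hinj.eq_iff])
  refine h₁.sup (IsMatching.subgraphOfAdj _) ?_
  simp [h₁.support_eq_verts, Set.disjoint_left, hinj.eq_iff]

end AltPath5

theorem exists_isPerfectMatching_of_pairwise_disjoint_augPath5 {ι : Type*}
    (hM₀ : M₀.IsMatching) {P : ι → Fin 6 → V} (hP : ∀ i, AugPath5 G M₀ (P i))
    (hdisj : Pairwise fun i j ↦ ∀ a b, P i a ≠ P j b)
    (hcover : ∀ v ∉ M₀.verts, ∃ i a, P i a = v) :
    ∃ M : G.Subgraph, M.IsPerfectMatching := by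
  set S := ⋃ i, Set.range (P i)
  have hS : ∀ ⦃v w⦄, M₀.Adj v w → v ∈ S → w ∈ S := by
    rintro v w hvw hv
    obtain ⟨i, a, rfl⟩ := Set.mem_iUnion.1 hv
    exact Set.mem_iUnion.2 ⟨i, (hP i).mem_range_of_adj hM₀ hvw⟩
  set E : ι → G.Subgraph := fun i ↦ (hP i).toAltPath5.nonMatchingEdges
  have hEmatch : ∀ i, (E i).IsMatching := fun i ↦ (hP i).toAltPath5.isMatching_nonMatchingEdges
  have hEverts : ∀ i, (E i).verts = Set.range (P i) := fun i ↦
    (hP i).toAltPath5.verts_nonMatchingEdges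
  have hpaths : (⨆ i, E i).IsMatching := IsMatching.iSup hEmatch fun i j hij ↦ by
    simp only [(hEmatch _).support_eq_verts, hEverts, Set.disjoint_left]
    rintro _ ⟨a, rfl⟩ ⟨b, hb⟩
    exact hdisj hij a b hb.symm
  have hverts : (⨆ i, E i).verts = S := by simp only [verts_iSup, hEverts, S]
  -- the symmetric difference of `M₀` with the edge sets of the paths
  refine ⟨M₀.deleteVerts S ⊔ ⨆ i, E i, (hM₀.deleteVerts hS).sup hpaths ?_, ?_⟩
  · rw [(hM₀.deleteVerts hS).support_eq_verts, hpaths.support_eq_verts, deleteVerts_verts,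
      hverts]
    exact Set.disjoint_sdiff_left
  · intro v
    rw [verts_sup, deleteVerts_verts, hverts, Set.sdiff_union_self]
    by_cases hvM : v ∈ M₀.verts
    · exact Or.inl hvM
    · obtain ⟨i, a, rfl⟩ := hcover v hvM
      exact Or.inr (Set.mem_iUnion.2 ⟨i, a, rfl⟩)

end AugmentingPaths

theorem many_alternating_paths_perfect_matching_general {V : Type*}
    (G : SimpleGraph V) (X Y : Finset V)
    (hpart : ∀ v : V, v ∈ X ∨ v ∈ Y) (hdisj : Disjoint X Y)
    (M₀ : G.Subgraph) (hmatch : M₀.IsMatching)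
    (k : ℕ) (zx zy : Fin k → V)
    (hzxinj : Function.Injective zx) (hzyinj : Function.Injective zy)
    (hzxmem : ∀ i, zx i ∈ X ∧ zx i ∉ M₀.verts)
    (hzymem : ∀ i, zy i ∈ Y ∧ zy i ∉ M₀.verts)
    (hzxall : ∀ v ∈ X, v ∉ M₀.verts → ∃ i, zx i = v)
    (hzyall : ∀ v ∈ Y, v ∉ M₀.verts → ∃ i, zy i = v)
    (c : ℝ) (N : ℕ)
    (Fam : Fin k → Fin k → Finset (Fin 6 → V))
    (hcard : ∀ i j, c * (N : ℝ) ≤ ((Fam i j).card : ℝ))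
    (hmem : ∀ i j, ∀ p ∈ Fam i j, AltPath5 G M₀ p ∧ p 0 = zx i ∧ p 5 = zy j)
    (hintdisj : ∀ i j, ∀ p ∈ Fam i j, ∀ q ∈ Fam i j, p ≠ q →
      ∀ a b : Fin 6, a ≠ 0 → a ≠ 5 → b ≠ 0 → b ≠ 5 → p a ≠ q b)
    (hk : (5 * k : ℝ) < c * (N : ℝ)) :
    (∃ P : Fin k → Fin 6 → V, (∀ i, P i ∈ Fam i i) ∧
      ∀ i j, i ≠ j → ∀ a b : Fin 6, P i a ≠ P j b) ∧
    ∃ M' : G.Subgraph, M'.IsPerfectMatching := by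
  classical
  have hFam : ∀ i, ∀ p ∈ Fam i i, AugPath5 G M₀ p ∧ p 0 = zx i ∧ p 5 = zy i := by
    intro i p hp
    obtain ⟨halt, h0, h5⟩ := hmem i i p hp
    exact ⟨⟨halt, h0 ▸ (hzxmem i).2, h5 ▸ (hzymem i).2⟩, h0, h5⟩
  have hxy : ∀ i j, zx i ≠ zy j := fun i j h ↦
    Finset.disjoint_left.1 hdisj (hzxmem i).1 (h ▸ (hzymem j).1)
  have hmeet : ∀ i j, i ≠ j → ∀ q ∈ Fam j j, #{p ∈ Fam i i | ∃ a b, p a = q b} ≤ 4 := by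
    intro i j hij q hq
    obtain ⟨hqaug, hq0, hq5⟩ := hFam j q hq
    refine AugPath5.card_filter_exists_apply_eq_le_four (fun p hp ↦ (hFam i p hp).1)
      (hintdisj i i) hqaug fun p hp ↦ ?_
    rw [(hFam i p hp).2.1, (hFam i p hp).2.2, hq0, hq5]
    simp [Set.disjoint_left, hzxinj.ne hij, hzyinj.ne hij, hxy, (hxy _ _).symm]
  have hsize : ∀ i, 4 * (Fintype.card (Fin k) - 1) < #(Fam i i) := by
    intro i
    have : 5 * k < #(Fam i i) := by exact_mod_cast hk.trans_le (hcard i i)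
    rw [Fintype.card_fin]
    omega
  obtain ⟨P, hPF, hP⟩ := exists_selection_pairwise_not_rel (fun i ↦ Fam i i)
    (fun p q ↦ ∃ a b, p a = q b) (fun _ _ ⟨a, b, h⟩ ↦ ⟨b, a, h.symm⟩) 4 hmeet hsize
  have hPdisj : ∀ i j, i ≠ j → ∀ a b, P i a ≠ P j b := fun i j hij a b h ↦ hP hij ⟨a, b, h⟩
  refine ⟨⟨P, hPF, hPdisj⟩, exists_isPerfectMatching_of_pairwise_disjoint_augPath5 hmatch
    (fun i ↦ (hFam i _ (hPF i)).1) hPdisj fun v hv ↦ ?_⟩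
  rcases hpart v with hvX | hvY
  · obtain ⟨i, rfl⟩ := hzxall v hvX hv
    exact ⟨i, 0, (hFam i _ (hPF i)).2.1⟩
  · obtain ⟨i, rfl⟩ := hzyall v hvY hv
    exact ⟨i, 5, (hFam i _ (hPF i)).2.2⟩

/-- If every pair of unmatched vertices admits at least `c·N` internally vertex-disjoint
alternating paths of length 5, and the number `k` of unmatched pairs satisfies `5k < cN`,
then pairwise vertex-disjoint alternating paths joining all unmatched pairs can be
selected, and hence the bipartite graph has a perfect matching. -/
theorem many_alternating_paths_perfect_matching {V : Type*} [Fintype V] [DecidableEq V]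
    (G : SimpleGraph V) (X Y : Finset V) (M : ℕ)
    (hX : X.card = M) (hY : Y.card = M)
    (hpart : ∀ v : V, v ∈ X ∨ v ∈ Y) (hdisj : Disjoint X Y)
    (hbip : ∀ u v : V, G.Adj u v → ¬(u ∈ X ∧ v ∈ X) ∧ ¬(u ∈ Y ∧ v ∈ Y))
    (M₀ : G.Subgraph) (hmatch : M₀.IsMatching)
    (k : ℕ) (zx zy : Fin k → V)
    (hzxinj : Function.Injective zx) (hzyinj : Function.Injective zy)
    (hzxmem : ∀ i, zx i ∈ X ∧ zx i ∉ M₀.verts)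
    (hzymem : ∀ i, zy i ∈ Y ∧ zy i ∉ M₀.verts)
    (hzxall : ∀ v ∈ X, v ∉ M₀.verts → ∃ i, zx i = v)
    (hzyall : ∀ v ∈ Y, v ∉ M₀.verts → ∃ i, zy i = v)
    (c : ℝ) (hc : 0 < c) (N : ℕ) (hN : 0 < N)
    (Fam : Fin k → Fin k → Finset (Fin 6 → V))
    (hcard : ∀ i j, c * (N : ℝ) ≤ ((Fam i j).card : ℝ))
    (hmem : ∀ i j, ∀ p ∈ Fam i j, AltPath5 G M₀ p ∧ p 0 = zx i ∧ p 5 = zy j)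
    (hintdisj : ∀ i j, ∀ p ∈ Fam i j, ∀ q ∈ Fam i j, p ≠ q →
      ∀ a b : Fin 6, a ≠ 0 → a ≠ 5 → b ≠ 0 → b ≠ 5 → p a ≠ q b)
    (hk : (5 * k : ℝ) < c * (N : ℝ)) :
    (∃ P : Fin k → Fin 6 → V, (∀ i, P i ∈ Fam i i) ∧
      ∀ i j, i ≠ j → ∀ a b : Fin 6, P i a ≠ P j b) ∧
    ∃ M' : G.Subgraph, M'.IsPerfectMatching :=
  many_alternating_paths_perfect_matching_general G X Y hpart hdisj M₀ hmatch k zx zy hzxinj hzyinj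
    hzxmem hzymem hzxall hzyall c N Fam hcard hmem hintdisj hk
end
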